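/- Let C be a binary linear code. Then ρ_maxfrac(C) ≥ ρ_AWGNC(C) ≥ ρ_BEC(C) and ρ_maxfrac(C) ≥ ρ_BSC(C) ≥ ρ_BEC(C), as elements of ℕ ∪ {∞}. -/

import Mathlib

open Matrix BigOperators Finset

section Defs

variable {J I : Type*} [Fintype J] [Fintype I] [DecidableEq I]

/-- The support of row `j` of a binary matrix `H`. -/
def rowSupp (H : Matrix J I (ZMod 2)) (j : J) : Finset I :=
  Finset.univ.filter fun i => H j i = 1

/-- The fundamental cone of a binary matrix `H`. -/
def fundCone (H : Matrix J I (ZMod 2)) : Set (I → ℝ) :=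
  {x | (∀ i, 0 ≤ x i) ∧
    ∀ j : J, ∀ ℓ ∈ rowSupp H j, x ℓ ≤ ∑ i ∈ (rowSupp H j).erase ℓ, x i}

/-- BEC pseudoweight: size of the support. -/
noncomputable def wBEC (x : I → ℝ) : ℝ := ({i | x i ≠ 0}.ncard : ℝ)

/-- AWGNC pseudoweight. -/
noncomputable def wAWGNC (x : I → ℝ) : ℝ := (∑ i, x i) ^ 2 / ∑ i, x i ^ 2

/-- Max-fractional weight. -/
noncomputable def wMaxFrac (x : I → ℝ) : ℝ := (∑ i, x i) / sSup (Set.range x)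

/-- `H` is a parity-check matrix of the code `C`. -/
def IsParityCheck (H : Matrix J I (ZMod 2)) (C : Submodule (ZMod 2) (I → ZMod 2)) : Prop :=
  ∀ c, c ∈ C ↔ H.mulVec c = 0

/-- Minimum Hamming distance of a code. -/
noncomputable def minDist (C : Submodule (ZMod 2) (I → ZMod 2)) : ℕ :=
  sInf {d | ∃ c ∈ C, c ≠ 0 ∧ hammingNorm c = d}

/-- Minimum pseudoweight of `H` w.r.t. pseudoweight function `w`:
the infimum of `w` over all nonzero pseudocodewords (`⊤` if there are none). -/
noncomputable def minPW (w : (I → ℝ) → ℝ) (H : Matrix J I (ZMod 2)) : EReal :=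
  sInf ((fun x => (w x : EReal)) '' (fundCone H \ {0}))

/-- The chain (connectivity) relation associated with a binary matrix whose rows
have weight 2: `i` and `i'` are related iff they are equal or joined by a chain of rows
whose supports are exactly consecutive pairs. -/
def chainRel (H : Matrix J I (ZMod 2)) (i i' : I) : Prop :=
  i = i' ∨ ∃ ℓ : ℕ, 1 ≤ ℓ ∧ ∃ (c : Fin (ℓ + 1) → I) (r : Fin ℓ → J),
    c 0 = i ∧ c (Fin.last ℓ) = i' ∧
    ∀ t : Fin ℓ, rowSupp H (r t) = {c t.castSucc, c t.succ}

/-- The 0-1 real matrix associated with a binary matrix. -/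
def toRealMatrix (H : Matrix J I (ZMod 2)) : Matrix J I ℝ :=
  Matrix.of fun j i => if H j i = 1 then (1 : ℝ) else 0

/-- The Tanner graph of a binary matrix. -/
def tannerGraph (H : Matrix J I (ZMod 2)) : SimpleGraph (J ⊕ I) :=
  SimpleGraph.fromRel fun u v => ∃ j i, u = Sum.inl j ∧ v = Sum.inr i ∧ H j i = 1

end Defs

/-- The multiset of (real) eigenvalues, with multiplicity, of a real square matrix:
the real roots of its characteristic polynomial. -/
noncomputable def eigMult {ι : Type*} [Fintype ι] [DecidableEq ι] (A : Matrix ι ι ℝ) :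
    Multiset ℝ :=
  A.charpoly.roots

section FinDefs

variable {n : ℕ}

/-- The non-increasing rearrangement of a real vector. -/
noncomputable def sortDesc (x : Fin n → ℝ) : Fin n → ℝ :=
  fun i => x (Tuple.sort (fun j => -x j) i)

/-- `Φ(ξ) = ∫₀^ξ φ`, where `φ(ξ) = x'_i` for `i - 1 < ξ ≤ i` and `x'` is the
non-increasing rearrangement of `x`. -/
noncomputable def bigPhi (x : Fin n → ℝ) (ξ : ℝ) : ℝ :=
  ∑ i : Fin n, sortDesc x i * min 1 (max 0 (ξ - (i : ℝ)))

/-- BSC pseudoweight: `2 Φ⁻¹(Φ(n)/2)`. -/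
noncomputable def wBSC (x : Fin n → ℝ) : ℝ :=
  2 * sInf {ξ : ℝ | bigPhi x (n : ℝ) / 2 ≤ bigPhi x ξ}

/-- The pseudocodeword redundancy of a code `C` w.r.t. the pseudoweight function `w`:
the smallest number of rows of a parity-check matrix `H` of `C` whose minimum
pseudoweight equals the minimum distance of `C` (`⊤` if there is no such matrix). -/
noncomputable def pcRedundancy (w : (Fin n → ℝ) → ℝ)
    (C : Submodule (ZMod 2) (Fin n → ZMod 2)) : ℕ∞ :=
  sInf {k : ℕ∞ | ∃ (m : ℕ) (H : Matrix (Fin m) (Fin n) (ZMod 2)),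
    k = (m : ℕ∞) ∧ IsParityCheck H C ∧ minPW w H = ((minDist C : ℝ) : EReal)}

end FinDefs

/-!
On a nonnegative nonzero vector `x` we have `1 ≤ w_maxfrac x ≤ w_AWGNC x ≤ w_BEC x` and
`w_maxfrac x ≤ w_BSC x ≤ w_BEC x`, and all four weights equal the Hamming weight on the `0`-`1`
image of a codeword, which lies in every fundamental cone `K(H)` with `C = ker H`. Hence if
`w₁ ≤ w₂` and `w₁^min(H) = d(C)`, then `w₂^min(H)` is at least `d(C)` and at most the weight of a
minimum-weight codeword, so `w₂^min(H) = d(C)`: every matrix counted by `ρ_{w₁}` is counted by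
`ρ_{w₂}`. For the BSC pseudoweight, `Φ(ξ) ≤ ξ · max x` gives the lower bound, and Chebyshev's sum
inequality for the sorted vector gives `Φ(k/2) ≥ Φ(n)/2`, `k = |supp x|`, hence the upper bound.
-/

lemma sum_range_ramp (ξ : ℝ) (m : ℕ) :
    ∑ i ∈ range m, min 1 (max 0 (ξ - i)) = min ξ m - min ξ 0 := by
  have h := Finset.sum_range_sub (fun i : ℕ => min ξ (i : ℝ)) m
  rw [Nat.cast_zero] at h
  rw [← h]
  refine Finset.sum_congr rfl fun i _ => ?_
  push_cast
  simp only [min_def, max_def]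
  split_ifs <;> linarith

lemma ramp_nonneg (ξ t : ℝ) : 0 ≤ min 1 (max 0 (ξ - t)) :=
  le_min zero_le_one (le_max_left _ _)

section SortDesc

variable {n : ℕ}

lemma sortDesc_antitone (x : Fin n → ℝ) : Antitone (sortDesc x) := fun a b hab => by
  simpa [sortDesc] using Tuple.monotone_sort (fun j => -x j) hab

lemma sum_sortDesc (x : Fin n → ℝ) : ∑ i, sortDesc x i = ∑ i, x i :=
  Equiv.sum_comp (Tuple.sort fun j => -x j) x

lemma ncard_support_sortDesc (x : Fin n → ℝ) :
    {i | sortDesc x i ≠ 0}.ncard = {i | x i ≠ 0}.ncard :=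
  Set.ncard_preimage_of_injective_subset_range (s := {i | x i ≠ 0})
    (Tuple.sort fun j => -x j).injective
    (by simp [(Tuple.sort fun j => -x j).surjective.range_eq])

lemma sortDesc_eq_zero_of_ncard_le {x : Fin n → ℝ} (hx : 0 ≤ x) {i : Fin n}
    (hi : {i | x i ≠ 0}.ncard ≤ i) : sortDesc x i = 0 := by
  by_contra h
  have hsub : Set.Iic i ⊆ {j | sortDesc x j ≠ 0} := fun j hj =>
    ((lt_of_le_of_ne (hx _) (Ne.symm h)).trans_le (sortDesc_antitone x hj)).ne'
  have hcard := Set.ncard_le_ncard hsub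
  rw [← Finset.coe_Iic, Set.ncard_coe_finset, Fin.card_Iic, ncard_support_sortDesc] at hcard
  omega

noncomputable def sortDescSeq (x : Fin n → ℝ) (i : ℕ) : ℝ :=
  if h : i < n then sortDesc x ⟨i, h⟩ else 0

lemma sortDescSeq_antitone {x : Fin n → ℝ} (hx : 0 ≤ x) : Antitone (sortDescSeq x) := by
  intro a b hab
  unfold sortDescSeq
  split_ifs with ha hb hb
  · exact sortDesc_antitone x (Fin.mk_le_mk.mpr hab)
  · omega
  · exact hx _
  · exact le_rfl

lemma sortDescSeq_eq_zero_of_ncard_le {x : Fin n → ℝ} (hx : 0 ≤ x) {i : ℕ}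
    (hi : {i | x i ≠ 0}.ncard ≤ i) : sortDescSeq x i = 0 := by
  unfold sortDescSeq
  split_ifs
  · exact sortDesc_eq_zero_of_ncard_le hx hi
  · rfl

lemma sum_range_sortDescSeq_mul (x : Fin n → ℝ) (f : ℕ → ℝ) :
    ∑ i ∈ range n, sortDescSeq x i * f i = ∑ i, sortDesc x i * f i := by
  rw [← Fin.sum_univ_eq_sum_range]
  simp [sortDescSeq]

end SortDesc

section BigPhi

variable {n : ℕ}

lemma bigPhi_natCast (x : Fin n → ℝ) : bigPhi x n = ∑ i, x i := by
  rw [bigPhi, ← sum_sortDesc x]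
  refine Finset.sum_congr rfl fun i _ => ?_
  have hi : ((i : ℕ) : ℝ) + 1 ≤ n := by exact_mod_cast i.isLt
  rw [max_eq_right (by linarith), min_eq_left (by linarith), mul_one]

lemma bigPhi_le_mul {x : Fin n → ℝ} {M : ℝ} (hM : ∀ i, x i ≤ M) (hM0 : 0 ≤ M) (ξ : ℝ) :
    bigPhi x ξ ≤ M * max 0 ξ :=
  calc bigPhi x ξ ≤ ∑ i : Fin n, M * min 1 (max 0 (ξ - (i : ℕ))) :=
        Finset.sum_le_sum fun i _ => mul_le_mul_of_nonneg_right (hM _) (ramp_nonneg _ _)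
    _ = M * (min ξ n - min ξ 0) := by
        rw [← Finset.mul_sum, Fin.sum_univ_eq_sum_range (fun i : ℕ => min 1 (max 0 (ξ - i))),
          sum_range_ramp]
    _ ≤ M * max 0 ξ := by
        gcongr
        have : (0 : ℝ) ≤ n := n.cast_nonneg
        simp only [min_def, max_def]
        split_ifs <;> linarith

-- Chebyshev's sum inequality for the antitone sequences `x'ᵢ` and `min 1 (max 0 (k/2 - i))`
-- on `i < k`, where the second one sums to `k / 2`.
lemma sum_le_two_mul_bigPhi_half_ncard {x : Fin n → ℝ} (hx : 0 ≤ x) :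
    ∑ i, x i ≤ 2 * bigPhi x ({i | x i ≠ 0}.ncard / 2) := by
  set k := {i | x i ≠ 0}.ncard
  set A : ℕ → ℝ := fun i => min 1 (max 0 ((k : ℝ) / 2 - i))
  have hkn : k ≤ n := (Set.ncard_le_ncard (Set.subset_univ _)).trans (by simp)
  have hsub : range k ⊆ range n := Finset.range_subset_range.mpr hkn
  have hzero : ∀ i ∈ range n, i ∉ range k → sortDescSeq x i = 0 := fun i _ hi =>
    sortDescSeq_eq_zero_of_ncard_le hx (by simpa using hi)
  have hsum : ∑ i, x i = ∑ i ∈ range k, sortDescSeq x i := by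
    rw [← sum_sortDesc, Finset.sum_subset hsub hzero]
    simpa using (sum_range_sortDescSeq_mul x 1).symm
  have hPhi : bigPhi x (k / 2) = ∑ i ∈ range k, sortDescSeq x i * A i := by
    rw [Finset.sum_subset hsub fun i hi hik => by rw [hzero i hi hik, zero_mul]]
    exact (sum_range_sortDescSeq_mul x A).symm
  have hA : ∑ i ∈ range k, A i = k / 2 := by
    have : (0 : ℝ) ≤ k := k.cast_nonneg
    rw [sum_range_ramp, min_eq_left (by linarith), min_eq_right (by linarith), sub_zero]
  have hA_anti : Antitone A := fun a b hab => by
    simp only [A]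
    gcongr
  have hcheb := (((sortDescSeq_antitone hx).monovary hA_anti).monovaryOn
    (range k)).sum_mul_sum_le_card_mul_sum
  rw [hA, card_range, ← hPhi, ← hsum] at hcheb
  rcases k.eq_zero_or_pos with hk | hk
  · rw [hsum, hPhi]
    simp [hk]
  · have : (0 : ℝ) < k := by exact_mod_cast hk
    nlinarith

end BigPhi

section Pseudoweights

lemma exists_pos_of_nonneg_of_ne_zero {I : Type*} {x : I → ℝ} (hx : 0 ≤ x) (hx0 : x ≠ 0) :
    ∃ i, 0 < x i :=
  (Pi.lt_def.mp (lt_of_le_of_ne hx (Ne.symm hx0))).2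

variable {I : Type*} [Fintype I]

lemma le_sSup_range (x : I → ℝ) (i : I) : x i ≤ sSup (Set.range x) :=
  le_csSup (Set.finite_range x).bddAbove ⟨i, rfl⟩

lemma sSup_range_pos {x : I → ℝ} (hx : 0 ≤ x) (hx0 : x ≠ 0) : 0 < sSup (Set.range x) :=
  let ⟨i, hi⟩ := exists_pos_of_nonneg_of_ne_zero hx hx0
  hi.trans_le (le_sSup_range x i)

lemma sum_pos_of_nonneg_of_ne_zero {x : I → ℝ} (hx : 0 ≤ x) (hx0 : x ≠ 0) : 0 < ∑ i, x i :=
  let ⟨i, hi⟩ := exists_pos_of_nonneg_of_ne_zero hx hx0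
  Finset.sum_pos' (fun j _ => hx j) ⟨i, mem_univ i, hi⟩

lemma one_le_wMaxFrac {x : I → ℝ} (hx : 0 ≤ x) (hx0 : x ≠ 0) : 1 ≤ wMaxFrac x := by
  obtain ⟨i, hi⟩ := exists_pos_of_nonneg_of_ne_zero hx hx0
  have : Nonempty I := ⟨i⟩
  rw [wMaxFrac, one_le_div (sSup_range_pos hx hx0)]
  exact csSup_le (Set.range_nonempty x) (Set.forall_mem_range.mpr fun j =>
    Finset.single_le_sum (fun j _ => hx j) (mem_univ j))

lemma wMaxFrac_le_wAWGNC {x : I → ℝ} (hx : 0 ≤ x) (hx0 : x ≠ 0) : wMaxFrac x ≤ wAWGNC x := by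
  obtain ⟨i, hi⟩ := exists_pos_of_nonneg_of_ne_zero hx hx0
  have hM := sSup_range_pos hx hx0
  have hS := sum_pos_of_nonneg_of_ne_zero hx hx0
  have hQ : 0 < ∑ i, x i ^ 2 := Finset.sum_pos' (fun i _ => sq_nonneg _) ⟨i, mem_univ i, by positivity⟩
  have hQS : ∑ i, x i ^ 2 ≤ (∑ i, x i) * sSup (Set.range x) := by
    rw [Finset.sum_mul]
    exact Finset.sum_le_sum fun i _ => by
      rw [sq]
      exact mul_le_mul_of_nonneg_left (le_sSup_range x i) (hx i)
  rw [wMaxFrac, wAWGNC, div_le_div_iff₀ hM hQ, sq, mul_assoc]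
  exact mul_le_mul_of_nonneg_left hQS hS.le

lemma wAWGNC_le_wBEC {x : I → ℝ} (hx : 0 ≤ x) (hx0 : x ≠ 0) : wAWGNC x ≤ wBEC x := by
  obtain ⟨i, hi⟩ := exists_pos_of_nonneg_of_ne_zero hx hx0
  have hQ : 0 < ∑ i, x i ^ 2 := Finset.sum_pos' (fun i _ => sq_nonneg _) ⟨i, mem_univ i, by positivity⟩
  have hsq : ∑ i ∈ {i | x i ≠ 0}, x i ^ 2 = ∑ i, x i ^ 2 :=
    Finset.sum_subset (Finset.subset_univ _) fun i _ hi => by simp_all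
  have hcs := sq_sum_le_card_mul_sum_sq (s := {i | x i ≠ 0}) (f := x)
  rw [Finset.sum_filter_ne_zero, hsq] at hcs
  rw [wAWGNC, wBEC, div_le_iff₀ hQ, Set.ncard_eq_toFinset_card', Set.toFinset_ofPred]
  exact hcs

end Pseudoweights

section BSC

variable {n : ℕ}

lemma wMaxFrac_div_two_mem_lowerBounds {x : Fin n → ℝ} (hx : 0 ≤ x) (hx0 : x ≠ 0) :
    wMaxFrac x / 2 ∈ lowerBounds {ξ : ℝ | bigPhi x n / 2 ≤ bigPhi x ξ} := by
  intro ξ hξ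
  rw [Set.mem_ofPred_eq, bigPhi_natCast] at hξ
  have hM := sSup_range_pos hx hx0
  have hS := sum_pos_of_nonneg_of_ne_zero hx hx0
  have hΦ := bigPhi_le_mul (le_sSup_range x) hM.le ξ
  have hξ0 : 0 < ξ := by
    by_contra! h
    rw [max_eq_left h, mul_zero] at hΦ
    linarith
  rw [max_eq_right hξ0.le] at hΦ
  rw [wMaxFrac, div_div, div_le_iff₀ (by positivity)]
  linarith

lemma wMaxFrac_le_wBSC {x : Fin n → ℝ} (hx : 0 ≤ x) (hx0 : x ≠ 0) : wMaxFrac x ≤ wBSC x := by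
  have hn : (n : ℝ) ∈ {ξ : ℝ | bigPhi x n / 2 ≤ bigPhi x ξ} := by
    have := (sum_pos_of_nonneg_of_ne_zero hx hx0).le
    rw [Set.mem_ofPred_eq, bigPhi_natCast]
    linarith
  rw [wBSC, ← div_le_iff₀' two_pos]
  exact le_csInf ⟨n, hn⟩ (wMaxFrac_div_two_mem_lowerBounds hx hx0)

lemma wBSC_le_wBEC {x : Fin n → ℝ} (hx : 0 ≤ x) (hx0 : x ≠ 0) : wBSC x ≤ wBEC x := by
  have hmem : wBEC x / 2 ∈ {ξ : ℝ | bigPhi x n / 2 ≤ bigPhi x ξ} := by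
    have := sum_le_two_mul_bigPhi_half_ncard hx
    rw [Set.mem_ofPred_eq, bigPhi_natCast, wBEC]
    linarith
  rw [wBSC, ← le_div_iff₀' two_pos]
  exact csInf_le ⟨_, wMaxFrac_div_two_mem_lowerBounds hx hx0⟩ hmem

end BSC

section Codewords

variable {I : Type*}

def realOfBinary (c : I → ZMod 2) : I → ℝ := fun i => if c i = 0 then 0 else 1

lemma realOfBinary_nonneg (c : I → ZMod 2) : 0 ≤ realOfBinary c := fun i => by
  unfold realOfBinary
  split_ifs <;> norm_num

lemma realOfBinary_ne_zero {c : I → ZMod 2} (hc : c ≠ 0) : realOfBinary c ≠ 0 := by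
  obtain ⟨i, hi⟩ := Function.ne_iff.mp hc
  exact Function.ne_iff.mpr ⟨i, by simpa [realOfBinary] using hi⟩

variable [Fintype I]

lemma sum_realOfBinary (c : I → ZMod 2) : ∑ i, realOfBinary c i = hammingNorm c := by
  simp [realOfBinary, Finset.sum_ite, hammingNorm]

lemma wBEC_realOfBinary (c : I → ZMod 2) : wBEC (realOfBinary c) = hammingNorm c := by
  simp [wBEC, realOfBinary, hammingNorm, Set.ncard_eq_toFinset_card']

lemma wMaxFrac_realOfBinary {c : I → ZMod 2} (hc : c ≠ 0) :
    wMaxFrac (realOfBinary c) = hammingNorm c := by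
  obtain ⟨i, hi⟩ := Function.ne_iff.mp hc
  have : Nonempty I := ⟨i⟩
  have hsup : sSup (Set.range (realOfBinary c)) = 1 := by
    refine le_antisymm (csSup_le (Set.range_nonempty _) ?_) ?_
    · rintro _ ⟨j, rfl⟩
      unfold realOfBinary
      split_ifs <;> norm_num
    · exact le_csSup (Set.finite_range _).bddAbove ⟨i, by simpa [realOfBinary] using hi⟩
  rw [wMaxFrac, hsup, div_one, sum_realOfBinary]

lemma eq_hammingNorm_of_wMaxFrac_le_of_le_wBEC {w : (I → ℝ) → ℝ} {c : I → ZMod 2} (hc : c ≠ 0)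
    (h₁ : wMaxFrac (realOfBinary c) ≤ w (realOfBinary c))
    (h₂ : w (realOfBinary c) ≤ wBEC (realOfBinary c)) :
    w (realOfBinary c) = hammingNorm c := by
  rw [wMaxFrac_realOfBinary hc] at h₁
  rw [wBEC_realOfBinary] at h₂
  exact le_antisymm h₂ h₁

lemma wAWGNC_realOfBinary {c : I → ZMod 2} (hc : c ≠ 0) :
    wAWGNC (realOfBinary c) = hammingNorm c :=
  have hx := realOfBinary_nonneg c
  have hx0 := realOfBinary_ne_zero hc
  eq_hammingNorm_of_wMaxFrac_le_of_le_wBEC hc (wMaxFrac_le_wAWGNC hx hx0)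
    (wAWGNC_le_wBEC hx hx0)

lemma mulVec_apply_eq_sum_rowSupp {J : Type*} (H : Matrix J I (ZMod 2)) (c : I → ZMod 2) (j : J) :
    (H *ᵥ c) j = ∑ i ∈ rowSupp H j, c i := by
  have hmul : ∀ a b : ZMod 2, a * b = if a = 1 then b else 0 := by decide
  simp only [mulVec, dotProduct, rowSupp, Finset.sum_filter, hmul]

lemma realOfBinary_mem_fundCone [DecidableEq I] {J : Type*} {H : Matrix J I (ZMod 2)} {c : I → ZMod 2} (hc : H *ᵥ c = 0) :
    realOfBinary c ∈ fundCone H := by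
  refine ⟨realOfBinary_nonneg c, fun j ℓ hℓ => ?_⟩
  have hsum := sum_nonneg fun i (_ : i ∈ (rowSupp H j).erase ℓ) => realOfBinary_nonneg c i
  by_cases hcℓ : c ℓ = 0
  · simpa [realOfBinary, hcℓ] using hsum
  -- over `ZMod 2` the other entries of the row sum to `c ℓ ≠ 0`, so one of them is nonzero
  have hrest : ∑ i ∈ (rowSupp H j).erase ℓ, c i ≠ 0 := by
    have hrow := mulVec_apply_eq_sum_rowSupp H c j
    rw [hc, Pi.zero_apply, ← Finset.add_sum_erase _ _ hℓ, eq_comm, add_eq_zero_iff_eq_neg',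
      ZMod.neg_eq_self_mod_two] at hrow
    rwa [hrow]
  obtain ⟨i, hi, hci⟩ := Finset.exists_ne_zero_of_sum_ne_zero hrest
  calc realOfBinary c ℓ = realOfBinary c i := by simp [realOfBinary, hcℓ, hci]
    _ ≤ _ := Finset.single_le_sum (fun i _ => realOfBinary_nonneg c i) hi

end Codewords

lemma wBSC_realOfBinary {n : ℕ} {c : Fin n → ZMod 2} (hc : c ≠ 0) :
    wBSC (realOfBinary c) = hammingNorm c :=
  have hx := realOfBinary_nonneg c
  have hx0 := realOfBinary_ne_zero hc
  eq_hammingNorm_of_wMaxFrac_le_of_le_wBEC hc (wMaxFrac_le_wBSC hx hx0) (wBSC_le_wBEC hx hx0)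

section MinPseudoweight

variable {J I : Type*} [Fintype I] [DecidableEq I]

lemma minPW_le {w : (I → ℝ) → ℝ} {H : Matrix J I (ZMod 2)} {x : I → ℝ}
    (hx : x ∈ fundCone H) (hx0 : x ≠ 0) : minPW w H ≤ w x :=
  sInf_le ⟨x, ⟨hx, hx0⟩, rfl⟩

lemma le_minPW {w : (I → ℝ) → ℝ} {H : Matrix J I (ZMod 2)} {a : EReal}
    (h : ∀ x ∈ fundCone H, x ≠ 0 → a ≤ w x) : a ≤ minPW w H :=
  le_sInf <| Set.forall_mem_image.mpr fun x hx => h x hx.1 hx.2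

-- `1 ≤ w₁` rules out the trivial code, whose minimum distance is the junk value `sInf ∅ = 0`.
lemma minPW_eq_minDist_of_le {w₁ w₂ : (I → ℝ) → ℝ} {H : Matrix J I (ZMod 2)}
    {C : Submodule (ZMod 2) (I → ZMod 2)} (hH : IsParityCheck H C)
    (h₁₂ : ∀ x : I → ℝ, 0 ≤ x → x ≠ 0 → w₁ x ≤ w₂ x)
    (h₁ : ∀ x : I → ℝ, 0 ≤ x → x ≠ 0 → 1 ≤ w₁ x)
    (h₂ : ∀ c : I → ZMod 2, c ≠ 0 → w₂ (realOfBinary c) = hammingNorm c)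
    (hmin : minPW w₁ H = (minDist C : ℝ)) :
    minPW w₂ H = (minDist C : ℝ) := by
  have hone : (1 : EReal) ≤ minPW w₁ H :=
    le_minPW fun x hx hx0 => EReal.coe_le_coe_iff.mpr (h₁ x hx.1 hx0)
  have hne : {d | ∃ c ∈ C, c ≠ 0 ∧ hammingNorm c = d}.Nonempty := by
    by_contra hempty
    rw [Set.not_nonempty_iff_eq_empty] at hempty
    rw [hmin, minDist, hempty, Nat.sInf_empty, Nat.cast_zero, EReal.coe_zero] at hone
    exact not_le.mpr zero_lt_one hone
  obtain ⟨c, hcC, hc0, hcd⟩ := Nat.sInf_mem hne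
  refine le_antisymm ?_ ?_
  · have := minPW_le (w := w₂) (realOfBinary_mem_fundCone ((hH c).mp hcC))
      (realOfBinary_ne_zero hc0)
    rwa [h₂ c hc0, hcd] at this
  · exact hmin ▸ le_minPW fun x hx hx0 =>
      (minPW_le hx hx0).trans (EReal.coe_le_coe_iff.mpr (h₁₂ x hx.1 hx0))

end MinPseudoweight

lemma pcRedundancy_le_of_le {n : ℕ} (C : Submodule (ZMod 2) (Fin n → ZMod 2))
    {w₁ w₂ : (Fin n → ℝ) → ℝ}
    (h₁₂ : ∀ x : Fin n → ℝ, 0 ≤ x → x ≠ 0 → w₁ x ≤ w₂ x)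
    (h₁ : ∀ x : Fin n → ℝ, 0 ≤ x → x ≠ 0 → 1 ≤ w₁ x)
    (h₂ : ∀ c : Fin n → ZMod 2, c ≠ 0 → w₂ (realOfBinary c) = hammingNorm c) :
    pcRedundancy w₂ C ≤ pcRedundancy w₁ C :=
  sInf_le_sInf fun _ ⟨m, H, hk, hH, hmin⟩ =>
    ⟨m, H, hk, hH, minPW_eq_minDist_of_le hH h₁₂ h₁ h₂ hmin⟩

/-- For a binary linear code `C`,
`ρ_maxfrac(C) ≥ ρ_AWGNC(C) ≥ ρ_BEC(C)` and `ρ_maxfrac(C) ≥ ρ_BSC(C) ≥ ρ_BEC(C)`,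
as elements of `ℕ ∪ {∞}`. -/
theorem statement1 {n : ℕ} (C : Submodule (ZMod 2) (Fin n → ZMod 2)) :
    pcRedundancy wBEC C ≤ pcRedundancy wAWGNC C ∧
    pcRedundancy wAWGNC C ≤ pcRedundancy wMaxFrac C ∧
    pcRedundancy wBEC C ≤ pcRedundancy wBSC C ∧
    pcRedundancy wBSC C ≤ pcRedundancy wMaxFrac C := by
  have one_le_wAWGNC (x : Fin n → ℝ) (hx : 0 ≤ x) (hx0 : x ≠ 0) : 1 ≤ wAWGNC x :=
    (one_le_wMaxFrac hx hx0).trans (wMaxFrac_le_wAWGNC hx hx0)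
  have one_le_wBSC (x : Fin n → ℝ) (hx : 0 ≤ x) (hx0 : x ≠ 0) : 1 ≤ wBSC x :=
    (one_le_wMaxFrac hx hx0).trans (wMaxFrac_le_wBSC hx hx0)
  exact ⟨pcRedundancy_le_of_le C (fun _ => wAWGNC_le_wBEC) one_le_wAWGNC
      fun c _ => wBEC_realOfBinary c,
    pcRedundancy_le_of_le C (fun _ => wMaxFrac_le_wAWGNC) (fun _ => one_le_wMaxFrac)
      fun _ => wAWGNC_realOfBinary,
    pcRedundancy_le_of_le C (fun _ => wBSC_le_wBEC) one_le_wBSC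
      fun c _ => wBEC_realOfBinary c,
    pcRedundancy_le_of_le C (fun _ => wMaxFrac_le_wBSC) (fun _ => one_le_wMaxFrac)
      fun _ => wBSC_realOfBinary⟩
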